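/- arXiv:1107.1859 — 2 statements merged into one kernel-verified Lean document; each statement's English description precedes it below -/
import Mathlib

section
/- Let G be a subgroup of SU(J) such that tr g ∈ ℝ for all g ∈ G, G contains a loxodromic element, and there is no G-stable 1-dimensional complex subspace of ℂ³. If W is a G-stable real subspace of ℂ³ with real dimension 3, then W is totally real, i.e. ⟨w,w'⟩ ∈ ℝ for all w, w' ∈ W. -/
open Matrix Polynomial

/-- The matrix `matJ` with rows `(1,0,0), (0,0,1), (0,1,0)`. -/
noncomputable def matJ : Matrix (Fin 3) (Fin 3) ℂ := !![1,0,0; 0,0,1; 0,1,0]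

/-- The Hermitian form `⟨x,y⟩ = x₀ conj y₀ + x₁ conj y₂ + x₂ conj y₁` on `ℂ³`. -/
noncomputable def herm (x y : Fin 3 → ℂ) : ℂ :=
  x 0 * star (y 0) + x 1 * star (y 2) + x 2 * star (y 1)

/-- Membership in `SU(matJ)`: determinant one and `gᴴ matJ g = matJ`. -/
def InSUJ (g : Matrix (Fin 3) (Fin 3) ℂ) : Prop :=
  g.det = 1 ∧ gᴴ * matJ * g = matJ

/-- `g` is loxodromic: it has an eigenvalue (root of its characteristic polynomial)
of modulus greater than `1`. -/
def Loxodromic (g : Matrix (Fin 3) (Fin 3) ℂ) : Prop :=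
  ∃ μ : ℂ, g.charpoly.IsRoot μ ∧ 1 < ‖μ‖

/-- `G` is a subgroup of `SU(matJ)`. -/
def IsSubgroupOfSUJ (G : Set (Matrix (Fin 3) (Fin 3) ℂ)) : Prop :=
  (∀ g ∈ G, InSUJ g) ∧ (1 : Matrix (Fin 3) (Fin 3) ℂ) ∈ G ∧
    (∀ g ∈ G, ∀ h ∈ G, g * h ∈ G) ∧ (∀ g ∈ G, g⁻¹ ∈ G)

/-- The trace condition: the trace of every loxodromic element of `G` lies in `ℝδ`
for some cubic root of unity `δ`. -/
def TraceCond (G : Set (Matrix (Fin 3) (Fin 3) ℂ)) : Prop :=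
  ∀ g ∈ G, Loxodromic g → ∃ δ : ℂ, δ ^ 3 = 1 ∧ ∃ r : ℝ, g.trace = (r : ℂ) * δ

/-- A real subspace `W ⊆ ℂ³` is `G`-stable. -/
def StableR (G : Set (Matrix (Fin 3) (Fin 3) ℂ)) (W : Submodule ℝ (Fin 3 → ℂ)) : Prop :=
  ∀ g ∈ G, ∀ w ∈ W, g.mulVec w ∈ W

/-- A complex subspace `W ⊆ ℂ³` is `G`-stable. -/
def StableC (G : Set (Matrix (Fin 3) (Fin 3) ℂ)) (W : Submodule ℂ (Fin 3 → ℂ)) : Prop :=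
  ∀ g ∈ G, ∀ w ∈ W, g.mulVec w ∈ W

/-- A real subspace `W ⊆ ℂ³` is totally real when the form is real on it. -/
def TotallyReal (W : Submodule ℝ (Fin 3 → ℂ)) : Prop :=
  ∀ w ∈ W, ∀ w' ∈ W, (herm w w').im = 0

/-!
The imaginary part of `herm` is a real alternating form, invariant under `G` because `G`
preserves `herm`. A skew-symmetric matrix of odd size is singular, so on the `3`-dimensional
space `W` this form has a nonzero radical, which is a real line unless the form vanishes on `W`.
That line is `G`-stable, hence so is the complex line it spans, which the hypothesis on `G` rules
out.
-/

open Module LinearMap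

lemma Submodule.exists_eq_span_singleton_of_finrank_eq_one {K V : Type*} [DivisionRing K]
    [AddCommGroup V] [Module K V] {S : Submodule K V} (h : finrank K S = 1) :
    ∃ v ≠ 0, S = K ∙ v := by
  obtain ⟨⟨v, hv⟩, hv0, hspan⟩ := finrank_eq_one_iff'.mp h
  refine ⟨v, by simpa using hv0,
    le_antisymm (fun w hw => ?_) ((span_singleton_le_iff_mem _ _).mpr hv)⟩
  obtain ⟨c, hc⟩ := hspan ⟨w, hw⟩
  exact mem_span_singleton.mpr ⟨c, congrArg Subtype.val hc⟩

lemma LinearMap.mem_map_ker_domRestrict₁₂ {R M N : Type*} [CommSemiring R] [AddCommMonoid M]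
    [Module R M] [AddCommMonoid N] [Module R N] {B : M →ₗ[R] M →ₗ[R] N} {W : Submodule R M}
    {v : M} :
    v ∈ (ker (B.domRestrict₁₂ W W)).map W.subtype ↔ v ∈ W ∧ ∀ w ∈ W, B v w = 0 := by
  constructor
  · rintro ⟨⟨v, hv⟩, hker, rfl⟩
    exact ⟨hv, fun w hw => congrArg (· ⟨w, hw⟩) hker⟩
  · rintro ⟨hv, hker⟩
    exact ⟨⟨v, hv⟩, LinearMap.ext fun w => hker w w.2, rfl⟩

namespace LinearMap.IsAlt

variable {K V : Type*} [Field K] [AddCommGroup V] [Module K V] [FiniteDimensional K V]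
  {B : LinearMap.BilinForm K V}

theorem ker_ne_bot_of_odd_finrank [NeZero (2 : K)] (hB : IsAlt B) (hV : Odd (finrank K V)) :
    ker B ≠ ⊥ := by
  intro hker
  let b := Module.finBasis K V
  set M := BilinForm.toMatrix b B
  have hMt : Mᵀ = -M := by
    ext i j
    simpa [M, BilinForm.toMatrix_apply] using (hB.neg (b i) (b j)).symm
  have hdet : M.det = 0 := by
    have := congrArg det hMt
    rw [det_transpose, det_neg, Fintype.card_fin, hV.neg_one_pow, neg_one_mul] at this
    have h2 : (2 : K) * M.det = 0 := by linear_combination this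
    exact (mul_eq_zero.mp h2).resolve_left two_ne_zero
  exact (Matrix.separatingLeft_iff_det_ne_zero.mp ((BilinForm.separatingLeft_toMatrix_iff b).mpr
    (separatingLeft_iff_ker_eq_bot.mpr hker))) hdet

theorem finrank_ker_add_two_le (hB : IsAlt B) (hB0 : B ≠ 0) :
    finrank K (ker B) + 2 ≤ finrank K V := by
  obtain ⟨x, y, hxy⟩ : ∃ x y, B x y ≠ 0 := by
    by_contra! h
    exact hB0 (LinearMap.ext₂ h)
  have hx : x ∉ ker B := fun hx => hxy (by rw [mem_ker.mp hx, zero_apply])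
  have hy : y ∉ ker B ⊔ K ∙ x := by
    intro hy
    obtain ⟨l, hl, _, hax, rfl⟩ := Submodule.mem_sup.mp hy
    obtain ⟨a, rfl⟩ := Submodule.mem_span_singleton.mp hax
    apply hxy
    rw [map_add, map_smul, hB x, smul_zero, add_zero, ← hB.neg, mem_ker.mp hl, zero_apply,
      neg_zero]
  have h₁ : ker B < ker B ⊔ K ∙ x :=
    SetLike.lt_iff_le_and_exists.mpr
      ⟨le_sup_left, x, Submodule.mem_sup_right (Submodule.mem_span_singleton_self x), hx⟩
  have h₂ := Submodule.finrank_lt_finrank_of_lt h₁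
  have h₃ := Submodule.finrank_lt (s := ker B ⊔ K ∙ x) fun h => hy (h ▸ Submodule.mem_top)
  omega

theorem finrank_ker_eq_one [NeZero (2 : K)] (hB : IsAlt B) (hB0 : B ≠ 0) (hV : finrank K V = 3) :
    finrank K (ker B) = 1 := by
  have h₁ := hB.finrank_ker_add_two_le hB0
  have h₂ : finrank K (ker B) ≠ 0 :=
    fun h => hB.ker_ne_bot_of_odd_finrank (by rw [hV]; decide) (Submodule.finrank_eq_zero.mp h)
  omega

end LinearMap.IsAlt

lemma herm_eq_star_dotProduct (x y : Fin 3 → ℂ) : herm x y = star y ⬝ᵥ matJ *ᵥ x := by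
  simp only [herm, RCLike.star_def, dotProduct, Pi.star_apply, mulVec, matJ, of_apply, cons_val',
    cons_val_fin_one, Fin.sum_univ_three, cons_val_zero, cons_val_one, cons_val, one_mul, zero_mul,
    add_zero, zero_add]
  ring

lemma herm_mulVec_mulVec {g : Matrix (Fin 3) (Fin 3) ℂ} (hg : gᴴ * matJ * g = matJ)
    (x y : Fin 3 → ℂ) : herm (g *ᵥ x) (g *ᵥ y) = herm x y := by
  rw [herm_eq_star_dotProduct, herm_eq_star_dotProduct, star_mulVec, ← dotProduct_mulVec,
    mulVec_mulVec, mulVec_mulVec, hg]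

noncomputable def imHerm : LinearMap.BilinForm ℝ (Fin 3 → ℂ) :=
  mk₂ ℝ (fun x y => (herm x y).im)
    (fun x x' y => by simp only [herm, Pi.add_apply, add_mul, Complex.add_im]; ring)
    (fun r x y => by
      simp only [herm, Pi.smul_apply, Complex.real_smul, Complex.add_im, Complex.mul_im,
        Complex.re_ofReal_mul, Complex.ofReal_re, Complex.ofReal_im, smul_eq_mul]
      ring)
    (fun x y y' => by simp only [herm, Pi.add_apply, star_add, mul_add, Complex.add_im]; ring)
    (fun r x y => by
      simp only [herm, Pi.smul_apply, Complex.real_smul, star_mul', Complex.star_def,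
        Complex.conj_ofReal, Complex.add_im, Complex.mul_im, Complex.re_ofReal_mul,
        Complex.ofReal_re, Complex.ofReal_im, smul_eq_mul]
      ring)

lemma imHerm_apply (x y : Fin 3 → ℂ) : imHerm x y = (herm x y).im := rfl

lemma isAlt_imHerm : IsAlt imHerm := fun x => by
  simp only [imHerm_apply, herm, RCLike.star_def, Complex.add_im, Complex.mul_im, Complex.conj_im,
    mul_neg, Complex.conj_re]
  ring

noncomputable def imHermRadical (W : Submodule ℝ (Fin 3 → ℂ)) : Submodule ℝ (Fin 3 → ℂ) :=
  (ker (imHerm.domRestrict₁₂ W W)).map W.subtype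

lemma stableR_imHermRadical {G : Set (Matrix (Fin 3) (Fin 3) ℂ)} (hG : IsSubgroupOfSUJ G)
    {W : Submodule ℝ (Fin 3 → ℂ)} (hW : StableR G W) : StableR G (imHermRadical W) := by
  intro g hg v hv
  rw [imHermRadical, mem_map_ker_domRestrict₁₂] at hv ⊢
  refine ⟨hW g hg v hv.1, fun w hw => ?_⟩
  have hdet : IsUnit g.det := by rw [(hG.1 g hg).1]; exact isUnit_one
  calc imHerm (g *ᵥ v) w = imHerm (g *ᵥ v) (g *ᵥ (g⁻¹ *ᵥ w)) := by
        rw [mulVec_mulVec, mul_nonsing_inv _ hdet, one_mulVec]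
    _ = imHerm v (g⁻¹ *ᵥ w) := by
        rw [imHerm_apply, imHerm_apply, herm_mulVec_mulVec (hG.1 g hg).2]
    _ = 0 := hv.2 _ (hW _ (hG.2.2.2 g hg) w hw)

lemma StableR.stableC_span {G : Set (Matrix (Fin 3) (Fin 3) ℂ)} {S : Submodule ℝ (Fin 3 → ℂ)}
    (hS : StableR G S) : StableC G (Submodule.span ℂ (S : Set (Fin 3 → ℂ))) := fun g hg =>
  Submodule.span_le (p := (Submodule.span ℂ (S : Set (Fin 3 → ℂ))).comap (mulVecLin g)) |>.mpr
    fun v hv => Submodule.subset_span (hS g hg v hv)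

theorem statement_9_general (G : Set (Matrix (Fin 3) (Fin 3) ℂ))
    (hG : IsSubgroupOfSUJ G)
    (hNoLine : ¬ ∃ L : Submodule ℂ (Fin 3 → ℂ), Module.finrank ℂ L = 1 ∧ StableC G L)
    (W : Submodule ℝ (Fin 3 → ℂ)) (hW : StableR G W)
    (hdim : Module.finrank ℝ W = 3) :
    TotallyReal W := by
  by_contra hW_real
  have hB0 : imHerm.domRestrict₁₂ W W ≠ 0 := fun h =>
    hW_real fun w hw w' hw' => LinearMap.congr_fun₂ h ⟨w, hw⟩ ⟨w', hw'⟩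
  have hrad : finrank ℝ (imHermRadical W) = 1 := by
    rw [imHermRadical, Submodule.finrank_map_subtype_eq]
    exact IsAlt.finrank_ker_eq_one (fun w => isAlt_imHerm w) hB0 hdim
  obtain ⟨v, hv, hRv⟩ := Submodule.exists_eq_span_singleton_of_finrank_eq_one hrad
  refine hNoLine ⟨ℂ ∙ v, finrank_span_singleton hv, ?_⟩
  simpa [hRv, Submodule.span_span_of_tower] using (stableR_imHermRadical hG hW).stableC_span

theorem statement_9 (G : Set (Matrix (Fin 3) (Fin 3) ℂ))
    (hG : IsSubgroupOfSUJ G)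
    (hTr : ∀ g ∈ G, ∃ t : ℝ, g.trace = (t : ℂ))
    (hLox : ∃ g ∈ G, Loxodromic g)
    (hNoLine : ¬ ∃ L : Submodule ℂ (Fin 3 → ℂ), Module.finrank ℂ L = 1 ∧ StableC G L)
    (W : Submodule ℝ (Fin 3 → ℂ)) (hW : StableR G W)
    (hdim : Module.finrank ℝ W = 3) :
    TotallyReal W :=
  statement_9_general G hG hNoLine W hW hdim
end

section
/- Let g ∈ SU(J) with t := tr g ∈ ℝ. Then the characteristic polynomial of g factors as (X − 1)·(X² − (t − 1)·X + 1); in particular, 1 is an eigenvalue of g. If moreover g is loxodromic (has an eigenvalue of modulus greater than 1), then there exists a real number r with r ∉ {0, 1, −1} such that the eigenvalues of g are exactly 1, r, and r⁻¹. -/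
open Matrix Polynomial

/-!
Since `gᴴ J g = J`, `det g = 1` and `J² = 1`, the adjugate of `g` is `J gᴴ J`, whose trace is
`conj (tr g)`. The characteristic polynomial of a `3 × 3` matrix is
`X³ - (tr g) X² + (tr adj g) X - det g`, so a real trace `t` gives
`X³ - t X² + t X - 1 = (X - 1)(X² - (t - 1) X + 1)`. The quadratic factor is real and
reciprocal: its roots are `μ, μ⁻¹`, and if `μ` is not real they are also `μ, conj μ`, which
forces `|μ| = 1`. Hence an eigenvalue of modulus `> 1` is a real `r`, and the spectrum is
`{1, r, r⁻¹}`.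
-/

lemma Matrix.charpoly_fin_three {R : Type*} [CommRing R] (M : Matrix (Fin 3) (Fin 3) R) :
    M.charpoly = X ^ 3 - C M.trace * X ^ 2 + C M.adjugate.trace * X - C M.det := by
  simp only [charpoly, det_fin_three, Fin.isValue, charmatrix_apply_eq, ne_eq, Fin.reduceEq,
    not_false_eq_true, charmatrix_apply_ne, mul_neg, neg_mul, neg_neg, trace_fin_three, map_add,
    adjugate_fin_three, of_apply, cons_val', cons_val_zero, cons_val_fin_one, cons_val_one,
    cons_val, map_sub, map_mul]
  ring

lemma Matrix.adjugate_eq_mul_conjTranspose_mul {n R : Type*} [Fintype n] [DecidableEq n]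
    [CommRing R] [StarRing R] {g J : Matrix n n R} (hJ : J * J = 1) (hdet : g.det = 1)
    (hg : gᴴ * J * g = J) : g.adjugate = J * gᴴ * J := by
  have hinv : J * gᴴ * J * g = 1 := by
    rw [mul_assoc, mul_assoc, ← mul_assoc gᴴ, hg, hJ]
  calc g.adjugate = g.adjugate * (g * (J * gᴴ * J)) := by rw [mul_eq_one_comm.mp hinv, mul_one]
    _ = J * gᴴ * J := by rw [← mul_assoc, adjugate_mul, hdet, one_smul, one_mul]

lemma matJ_mul_matJ : matJ * matJ = 1 := by
  ext i j; fin_cases i <;> fin_cases j <;> simp [matJ, mul_apply, Fin.sum_univ_three, one_apply]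

namespace InSUJ

variable {g : Matrix (Fin 3) (Fin 3) ℂ}

lemma trace_adjugate (hg : InSUJ g) : g.adjugate.trace = star g.trace := by
  rw [adjugate_eq_mul_conjTranspose_mul matJ_mul_matJ hg.1 hg.2, trace_mul_cycle, matJ_mul_matJ,
    one_mul, trace_conjTranspose]

lemma charpoly_eq (hg : InSUJ g) :
    g.charpoly = X ^ 3 - C g.trace * X ^ 2 + C (star g.trace) * X - 1 := by
  rw [Matrix.charpoly_fin_three, hg.trace_adjugate, hg.1, C_1]

end InSUJ

lemma Polynomial.roots_X_sub_C_mul_X_sub_C_mul_X_sub_C {R : Type*} [CommRing R] [IsDomain R]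
    (a b c : R) : ((X - C a) * (X - C b) * (X - C c)).roots = {a, b, c} := by
  simpa [mul_assoc] using roots_multiset_prod_X_sub_C ({a, b, c} : Multiset R)

lemma Polynomial.X_sq_sub_C_mul_X_add_one_eq {K : Type*} [Field K] {s μ : K} (hμ : μ ≠ 0)
    (hroot : μ ^ 2 - s * μ + 1 = 0) : X ^ 2 - C s * X + 1 = (X - C μ) * (X - C μ⁻¹) := by
  have hs : s = μ + μ⁻¹ := by field_simp; linear_combination -hroot
  have hprod : C μ * C μ⁻¹ = (1 : K[X]) := by rw [← C_mul, mul_inv_cancel₀ hμ, C_1]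
  rw [hs, C_add]
  linear_combination -hprod

open ComplexConjugate in
lemma Complex.exists_ofReal_of_sq_sub_mul_add_one_eq_zero {s : ℝ} {μ : ℂ}
    (hroot : μ ^ 2 - s * μ + 1 = 0) (hnorm : ‖μ‖ ≠ 1) : ∃ r : ℝ, μ = r := by
  have hroot' : conj μ ^ 2 - s * conj μ + 1 = 0 := by
    simpa using congrArg conj hroot
  have hfac : (conj μ - μ) * (conj μ - (s - μ)) = 0 := by linear_combination hroot' - hroot
  rcases mul_eq_zero.mp hfac with h | h
  · exact ⟨μ.re, (conj_eq_iff_re.mp (sub_eq_zero.mp h)).symm⟩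
  · refine absurd ?_ hnorm
    have hnormSq : (normSq μ : ℂ) = 1 := by
      rw [← mul_conj, sub_eq_zero.mp h]; linear_combination -hroot
    rw [norm_def, show normSq μ = 1 by exact_mod_cast hnormSq, Real.sqrt_one]

theorem statement_13 (g : Matrix (Fin 3) (Fin 3) ℂ) (hg : InSUJ g)
    (t : ℝ) (ht : g.trace = (t : ℂ)) :
    g.charpoly = (X - 1) * (X ^ 2 - C ((t : ℂ) - 1) * X + 1) ∧
    g.charpoly.IsRoot 1 ∧
    (Loxodromic g → ∃ r : ℝ, r ≠ 0 ∧ r ≠ 1 ∧ r ≠ -1 ∧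
      g.charpoly.roots = {1, (r : ℂ), ((r⁻¹ : ℝ) : ℂ)}) := by
  have hcp : g.charpoly = (X - 1) * (X ^ 2 - C ((t : ℂ) - 1) * X + 1) := by
    rw [hg.charpoly_eq, ht, Complex.star_def, Complex.conj_ofReal, C_sub, C_1]
    ring
  refine ⟨hcp, by simp [hcp], ?_⟩
  rintro ⟨μ, hμ, hnorm⟩
  have hμ1 : μ ≠ 1 := by rintro rfl; simp at hnorm
  have hquad : μ ^ 2 - ((t : ℂ) - 1) * μ + 1 = 0 := by
    simpa [hcp, sub_eq_zero, hμ1] using hμ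
  obtain ⟨r, rfl⟩ :=
    Complex.exists_ofReal_of_sq_sub_mul_add_one_eq_zero (s := t - 1) (by push_cast; exact hquad)
      hnorm.ne'
  have hr : 1 < |r| := by simpa using hnorm
  have hr0 : r ≠ 0 := by rintro rfl; norm_num at hr
  refine ⟨r, hr0, by rintro rfl; norm_num at hr, by rintro rfl; norm_num at hr, ?_⟩
  rw [hcp, X_sq_sub_C_mul_X_add_one_eq (Complex.ofReal_ne_zero.mpr hr0) hquad, ← mul_assoc, ← C_1,
    roots_X_sub_C_mul_X_sub_C_mul_X_sub_C, Complex.ofReal_inv]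
end
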